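/- Let g be a standard Gaussian random vector in ℝ^m (m ≥ 1) and let x > 0. Then the probability that ‖g‖⁻¹ ≥ x (equivalently that ‖g‖ ≤ 1/x) is at most (m/2)^{(m−2)/2} / (Γ(m/2) · x^m), where ‖·‖ is the Euclidean norm and Γ is the Gamma function. -/

import Mathlib

open Matrix MeasureTheory ProbabilityTheory

/-- The `j`-th largest singular value (1-indexed; `0` for `j` out of range). -/
noncomputable def sval {m n : ℕ} (A : Matrix (Fin m) (Fin n) ℝ) (j : ℕ) : ℝ :=
  if h : 1 ≤ j ∧ j ≤ n then
    Real.sqrt ((by have h := Matrix.isHermitian_conjTranspose_mul_self A; rwa [Matrix.conjTranspose_eq_transpose_of_trivial] at h : (Aᵀ * A).IsHermitian).eigenvalues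
      (Tuple.sort (by have h := Matrix.isHermitian_conjTranspose_mul_self A; rwa [Matrix.conjTranspose_eq_transpose_of_trivial] at h : (Aᵀ * A).IsHermitian).eigenvalues ⟨n - j, by omega⟩))
  else 0

/-- The spectral norm of a real matrix. -/
noncomputable def spec {m n : ℕ} (A : Matrix (Fin m) (Fin n) ℝ) : ℝ :=
  ‖LinearMap.toContinuousLinearMap (Matrix.toEuclideanLin A)‖

open Classical in
/-- The Moore–Penrose pseudo-inverse. -/
noncomputable def pinv {m n : ℕ} (M : Matrix (Fin m) (Fin n) ℝ) : Matrix (Fin n) (Fin m) ℝ :=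
  if h : ∃ X : Matrix (Fin n) (Fin m) ℝ,
      M * X * M = M ∧ X * M * X = X ∧ (M * X)ᵀ = M * X ∧ (X * M)ᵀ = X * M
  then h.choose else 0

/-- Leading (northwestern) `k × l` submatrix. -/
def lead {m n : ℕ} (A : Matrix (Fin m) (Fin n) ℝ) (k l : ℕ) (hk : k ≤ m) (hl : l ≤ n) :
    Matrix (Fin k) (Fin l) ℝ :=
  A.submatrix (Fin.castLE hk) (Fin.castLE hl)

/-- Schur complement of the leading `h × h` block in `A`. -/
noncomputable def schur {n : ℕ} (A : Matrix (Fin n) (Fin n) ℝ) (h : ℕ) (hh : h ≤ n) :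
    Matrix (Fin (n - h)) (Fin (n - h)) ℝ :=
  A.submatrix (fun i => (⟨h + i.1, by have := i.isLt; omega⟩ : Fin n))
      (fun j => (⟨h + j.1, by have := j.isLt; omega⟩ : Fin n))
    - A.submatrix (fun i => (⟨h + i.1, by have := i.isLt; omega⟩ : Fin n)) (Fin.castLE hh)
      * (A.submatrix (Fin.castLE hh) (Fin.castLE hh))⁻¹
      * A.submatrix (Fin.castLE hh) (fun j => (⟨h + j.1, by have := j.isLt; omega⟩ : Fin n))

/-- The distribution of a standard Gaussian random `m × n` matrix (as entrywise functions). -/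
noncomputable def stdGaussianM (m n : ℕ) : Measure (Fin m → Fin n → ℝ) :=
  Measure.pi fun _ => Measure.pi fun _ => gaussianReal 0 1

/-- The `m × n` "diagonal" matrix of singular values of `A` in nonincreasing order. -/
noncomputable def svdSigma {m n : ℕ} (A : Matrix (Fin m) (Fin n) ℝ) : Matrix (Fin m) (Fin n) ℝ :=
  Matrix.of fun i j => if (i : ℕ) = (j : ℕ) then sval A ((i : ℕ) + 1) else 0

/-!
The Euclidean ball of radius `r` lies in the cube `[-r, r]^m`, and since the standard Gaussian
density is at most `1/√(2π)`, the cube has measure at most `(2r/√(2π))^m = (2/π)^{m/2} r^m`.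
It remains to show `(2/π)^{m/2} Γ(m/2) ≤ (m/2)^{(m-2)/2}`, which follows by induction in steps
of two from `Γ(s+1) = s Γ(s)`, `2/π ≤ 1`, and the base cases `Γ(1/2) = √π`, `Γ(1) = 1`.
-/

open Real Metric

lemma ProbabilityTheory.gaussianPDFReal_le (μ : ℝ) (v : NNReal) (y : ℝ) :
    gaussianPDFReal μ v y ≤ (√(2 * π * v))⁻¹ := by
  refine mul_le_of_le_one_right (by positivity) (exp_le_one_iff.2 ?_)
  exact div_nonpos_of_nonpos_of_nonneg (neg_nonpos.2 (sq_nonneg _)) (by positivity)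

lemma ProbabilityTheory.gaussianReal_closedBall_le (μ : ℝ) {v : NNReal} (hv : v ≠ 0) (a r : ℝ) :
    gaussianReal μ v (closedBall a r) ≤ ENNReal.ofReal ((√(2 * π * v))⁻¹ * (2 * r)) := by
  rw [gaussianReal_apply μ hv]
  calc ∫⁻ y in closedBall a r, gaussianPDF μ v y
      ≤ ∫⁻ _ in closedBall a r, ENNReal.ofReal (√(2 * π * v))⁻¹ :=
        lintegral_mono fun y => ENNReal.ofReal_le_ofReal (gaussianPDFReal_le μ v y)
    _ = _ := by
      rw [setLIntegral_const, Real.volume_closedBall, ← ENNReal.ofReal_mul (by positivity)]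

lemma setOf_sqrt_sum_sq_le_subset_pi_closedBall {ι : Type*} [Fintype ι] (r : ℝ) :
    {g : ι → ℝ | √(∑ i, g i ^ 2) ≤ r} ⊆ Set.univ.pi fun _ => closedBall 0 r := by
  intro g hg i _
  rw [mem_closedBall, dist_zero_right, norm_eq_abs, ← sqrt_sq_eq_abs]
  have hgi : g i ^ 2 ≤ ∑ j, g j ^ 2 :=
    Finset.single_le_sum (fun j _ => sq_nonneg (g j)) (Finset.mem_univ i)
  exact (sqrt_le_sqrt hgi).trans hg

lemma MeasureTheory.Measure.pi_setOf_sqrt_sum_sq_le_le_prod {ι : Type*} [Fintype ι]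
    (μ : ι → Measure ℝ) [∀ i, SigmaFinite (μ i)] (r : ℝ) :
    Measure.pi μ {g : ι → ℝ | √(∑ i, g i ^ 2) ≤ r} ≤ ∏ i, μ i (closedBall 0 r) :=
  (measure_mono (setOf_sqrt_sum_sq_le_subset_pi_closedBall r)).trans_eq (Measure.pi_pi _ _)

lemma Real.Gamma_add_one_mul_rpow_le {s : ℝ} (hs : 0 < s)
    (h : Gamma s * (2 / π) ^ s ≤ s ^ (s - 1)) :
    Gamma (s + 1) * (2 / π) ^ (s + 1) ≤ (s + 1) ^ s := by
  have hπ : 2 / π ≤ 1 := (div_le_one pi_pos).2 two_le_pi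
  calc Gamma (s + 1) * (2 / π) ^ (s + 1) = s * (Gamma s * (2 / π) ^ s) * (2 / π) := by
        rw [Gamma_add_one hs.ne', rpow_add_one (by positivity)]; ring
    _ ≤ s * s ^ (s - 1) * 1 := by gcongr
    _ = s ^ s := by rw [mul_one, ← rpow_one_add' hs.le (by linarith)]; ring_nf
    _ ≤ (s + 1) ^ s := rpow_le_rpow hs.le (by linarith) hs.le

lemma Real.Gamma_half_mul_rpow_le (m : ℕ) (hm : 1 ≤ m) :
    Gamma (m / 2) * (2 / π) ^ ((m : ℝ) / 2) ≤ ((m : ℝ) / 2) ^ (((m : ℝ) - 2) / 2) := by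
  induction m using Nat.twoStepInduction with
  | zero => omega
  | one =>
    have h2 : ((1 : ℝ) / 2) ^ (((1 : ℝ) - 2) / 2) = √2 := by
      rw [show ((1 : ℝ) - 2) / 2 = -(1 / 2) by norm_num, rpow_neg (by norm_num),
        ← inv_rpow (by norm_num), ← sqrt_eq_rpow]
      norm_num
    rw [Nat.cast_one, Gamma_one_half_eq, h2, ← sqrt_eq_rpow, ← sqrt_mul pi_pos.le,
      mul_div_cancel₀ _ pi_pos.ne']
  | more n ih _ =>
    rcases Nat.eq_zero_or_pos n with rfl | hn
    · norm_num [Gamma_one]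
      exact (div_le_one pi_pos).2 two_le_pi
    · have h := Gamma_add_one_mul_rpow_le (s := n / 2) (by positivity)
        (by convert ih hn using 2; ring)
      convert h using 3 <;> push_cast <;> ring

/-- Tail bound for the reciprocal of the norm of a standard Gaussian vector:
`P(‖g‖ ≤ 1/x) ≤ (m/2)^{(m-2)/2} / (Γ(m/2)·x^m)`. -/
theorem gaussian_vector_small_norm_bound (m : ℕ) (hm : 1 ≤ m) (x : ℝ) (hx : 0 < x) :
    (Measure.pi fun _ : Fin m => gaussianReal 0 1)
        {g : Fin m → ℝ | Real.sqrt (∑ i, g i ^ 2) ≤ 1 / x} ≤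
      ENNReal.ofReal
        (((m : ℝ) / 2) ^ (((m : ℝ) - 2) / 2) / (Real.Gamma ((m : ℝ) / 2) * x ^ m)) := by
  have hdensity : (√(2 * π * (1 : NNReal)))⁻¹ * 2 = (2 / π) ^ (1 / 2 : ℝ) := by
    rw [← sqrt_eq_rpow, NNReal.coe_one, mul_one, sqrt_div' _ pi_pos.le, sqrt_mul' _ pi_pos.le]
    field_simp
    norm_num
  have hpow : ((2 / π) ^ (1 / 2 : ℝ)) ^ m = (2 / π) ^ ((m : ℝ) / 2) := by
    rw [← rpow_natCast, ← rpow_mul (by positivity)]; ring_nf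
  calc _ ≤ ∏ _i : Fin m, gaussianReal 0 1 (closedBall 0 (1 / x)) :=
        Measure.pi_setOf_sqrt_sum_sq_le_le_prod _ _
    _ = gaussianReal 0 1 (closedBall 0 (1 / x)) ^ m := by simp
    _ ≤ ENNReal.ofReal ((2 / π) ^ (1 / 2 : ℝ) / x) ^ m := by
        gcongr
        convert gaussianReal_closedBall_le 0 one_ne_zero 0 (1 / x) using 2
        rw [← hdensity]; ring
    _ = ENNReal.ofReal ((2 / π) ^ ((m : ℝ) / 2) / x ^ m) := by
        rw [← ENNReal.ofReal_pow (by positivity), div_pow, hpow]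
    _ ≤ _ := by
        gcongr ENNReal.ofReal ?_
        rw [div_le_div_iff₀ (by positivity) (by positivity), ← mul_assoc, mul_comm _ (Gamma _)]
        gcongr
        exact Gamma_half_mul_rpow_le m hm
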